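/- For every k ≥ 1 and every prime p, ∑_{n=0}^∞ n! · (n^k + u_k) = v_k in ℚ_p, where u_k and v_k are the integers defined by the recurrences u_1 = 0, u_{k+1} = −k·u_k − ∑_{ℓ=1}^{k-1} C(k+1,ℓ)·u_ℓ + 1, and v_{k+1} = −k·v_k − ∑_{ℓ=1}^{k-1} C(k+1,ℓ)·v_ℓ − δ_{0k} with the convention stemming from k = 0. -/
import Mathlib


open Nat Finset Filter Topology

variable {p : ℕ} [Fact p.Prime]


variable {p : ℕ} [Fact p.Prime]

lemma pow_div_dvd_factorial (p n : ℕ) (hp : p.Prime) : p ^ (n / p) ∣ n ! := by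
  induction n with
  | zero => simp
  | succ n ih =>
    by_cases hd : p ∣ n + 1
    · rw [Nat.succ_div_of_dvd hd, pow_succ, Nat.factorial_succ, mul_comm (p ^ (n / p)) p]
      exact Nat.mul_dvd_mul hd ih
    · rw [Nat.succ_div_of_not_dvd hd, Nat.factorial_succ]
      exact ih.mul_left _

lemma norm_factorial_le (n : ℕ) : ‖(n ! : ℚ_[p])‖ ≤ ((p : ℝ)⁻¹) ^ (n / p) := by
  obtain ⟨c, hc⟩ := pow_div_dvd_factorial p n (Fact.out : p.Prime)
  have h1 : (n ! : ℚ_[p]) = (p : ℚ_[p]) ^ (n / p) * (c : ℚ_[p]) := by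
    rw [hc, Nat.cast_mul, Nat.cast_pow]
  have h2 : ‖(c : ℚ_[p])‖ ≤ 1 := by
    have := Padic.norm_int_le_one (p := p) (c : ℤ)
    rwa [Int.cast_natCast] at this
  calc ‖(n ! : ℚ_[p])‖ = ‖(p : ℚ_[p])‖ ^ (n / p) * ‖(c : ℚ_[p])‖ := by
        rw [h1, norm_mul, norm_pow]
    _ ≤ ‖(p : ℚ_[p])‖ ^ (n / p) * 1 := by
        gcongr
    _ = ((p : ℝ)⁻¹) ^ (n / p) := by rw [mul_one, Padic.norm_p]

lemma tendsto_norm_factorial_zero :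
    Tendsto (fun n : ℕ => ‖(n ! : ℚ_[p])‖) atTop (𝓝 0) := by
  have hp1 : 1 < p := (Fact.out : p.Prime).one_lt
  have hr0 : (0:ℝ) ≤ (p : ℝ)⁻¹ := by positivity
  have hr1 : (p : ℝ)⁻¹ < 1 := by
    rw [inv_lt_one_iff₀]; right; exact_mod_cast hp1
  have hdiv : Tendsto (fun n : ℕ => n / p) atTop atTop := by
    apply Filter.tendsto_atTop_atTop.2
    intro b
    exact ⟨b * p, fun n hn => (Nat.le_div_iff_mul_le (by omega)).2 hn⟩
  have := (tendsto_pow_atTop_nhds_zero_of_lt_one hr0 hr1).comp hdiv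
  refine squeeze_zero (fun n => norm_nonneg _) (fun n => norm_factorial_le n) this

lemma summable_fact_mul (g : ℕ → ℚ_[p]) (hg : ∀ n, ‖g n‖ ≤ 1) :
    Summable (fun n : ℕ => (n ! : ℚ_[p]) * g n) := by
  apply NonarchimedeanAddGroup.summable_of_tendsto_cofinite_zero
  rw [Nat.cofinite_eq_atTop, tendsto_zero_iff_norm_tendsto_zero]
  apply squeeze_zero (fun n => norm_nonneg _) _ (tendsto_norm_factorial_zero (p := p))
  intro n
  rw [norm_mul]
  calc ‖(n ! : ℚ_[p])‖ * ‖g n‖ ≤ ‖(n ! : ℚ_[p])‖ * 1 := by gcongr; exact hg n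
    _ = _ := mul_one _

lemma norm_natCast_le_one' (n : ℕ) : ‖(n : ℚ_[p])‖ ≤ 1 := by
  have := Padic.norm_int_le_one (p := p) (n : ℤ)
  rwa [Int.cast_natCast] at this

/-- For `u_k, v_k` given by the recurrences of Table 1, for every `k ≥ 1` and every
prime `p`, `∑_{n=0}^∞ n!·(n^k + u_k) = v_k` in `ℚ_p`. -/
theorem hasSum_nk_plus_uk (u v : ℕ → ℤ)
    (hu1 : u 1 = 0)
    (hu : ∀ k : ℕ, 1 ≤ k →
      u (k + 1) = -(k : ℤ) * u k - (∑ ℓ ∈ Finset.Icc 1 (k - 1), ((k + 1).choose ℓ : ℤ) * u ℓ) + 1)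
    (hv : ∀ k : ℕ,
      v (k + 1) = -(k : ℤ) * v k - (∑ ℓ ∈ Finset.Icc 1 (k - 1), ((k + 1).choose ℓ : ℤ) * v ℓ)
        - (if k = 0 then 1 else 0))
    (k : ℕ) (hk : 1 ≤ k) (p : ℕ) [Fact p.Prime] :
    HasSum (fun n : ℕ => (n ! : ℚ_[p]) * ((n : ℚ_[p]) ^ k + (u k : ℚ_[p]))) (v k : ℚ_[p]) := by
  have hsummable : ∀ j : ℕ, Summable (fun n : ℕ => (n ! : ℚ_[p]) * (n : ℚ_[p]) ^ j) := by
    intro j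
    refine summable_fact_mul _ (fun n => ?_)
    calc ‖(n : ℚ_[p]) ^ j‖ = ‖(n : ℚ_[p])‖ ^ j := norm_pow _ _
      _ ≤ 1 ^ j := pow_le_pow_left₀ (norm_nonneg _) (norm_natCast_le_one' n) j
      _ = 1 := one_pow j
  set S : ℕ → ℚ_[p] := fun j => ∑' n, (n ! : ℚ_[p]) * (n : ℚ_[p]) ^ j with hSdef
  have hS : ∀ j, HasSum (fun n : ℕ => (n ! : ℚ_[p]) * (n : ℚ_[p]) ^ j) (S j) :=
    fun j => (hsummable j).hasSum
  have key : ∀ j : ℕ,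
      S j = ∑ ℓ ∈ Finset.range (j + 2), ((j + 1).choose ℓ : ℚ_[p]) * S ℓ
        + (if j = 0 then 1 else 0) := by
    intro j
    have h1 : HasSum (fun n : ℕ => (((n + 1)) ! : ℚ_[p]) * ((n + 1 : ℕ) : ℚ_[p]) ^ j)
        (S j - (if j = 0 then 1 else 0)) := by
      have h0 : HasSum (fun n : ℕ => ((n + 1) ! : ℚ_[p]) * ((n + 1 : ℕ) : ℚ_[p]) ^ j)
          (S j - ∑ i ∈ Finset.range 1, (i ! : ℚ_[p]) * (i : ℚ_[p]) ^ j) :=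
        ((hasSum_nat_add_iff' (f := fun n : ℕ => (n ! : ℚ_[p]) * (n : ℚ_[p]) ^ j) 1).2 (hS j))
      simpa [zero_pow_eq] using h0
    have heq : (fun n : ℕ => (((n + 1)) ! : ℚ_[p]) * ((n + 1 : ℕ) : ℚ_[p]) ^ j)
        = fun n : ℕ => ∑ ℓ ∈ Finset.range (j + 2),
            ((j + 1).choose ℓ : ℚ_[p]) * ((n ! : ℚ_[p]) * (n : ℚ_[p]) ^ ℓ) := by
      funext n
      have hp1 : (((n + 1)) ! : ℚ_[p]) * ((n + 1 : ℕ) : ℚ_[p]) ^ j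
          = (n ! : ℚ_[p]) * ((n : ℚ_[p]) + 1) ^ (j + 1) := by
        rw [Nat.factorial_succ]; push_cast; ring
      rw [hp1, add_pow, Finset.mul_sum]
      refine Finset.sum_congr rfl (fun ℓ hℓ => ?_)
      rw [one_pow]; ring
    rw [heq] at h1
    have h2 : HasSum (fun n : ℕ => ∑ ℓ ∈ Finset.range (j + 2),
          ((j + 1).choose ℓ : ℚ_[p]) * ((n ! : ℚ_[p]) * (n : ℚ_[p]) ^ ℓ))
        (∑ ℓ ∈ Finset.range (j + 2), ((j + 1).choose ℓ : ℚ_[p]) * S ℓ) :=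
      hasSum_sum (fun ℓ _ => (hS ℓ).mul_left _)
    have h3 := h1.unique h2
    rw [← h3]; ring
  have hS1 : S 1 = -1 := by
    have h := key 0
    simp only [Finset.sum_range_succ, Finset.range_one, Finset.sum_singleton] at h
    norm_num [Nat.choose] at h
    linear_combination -h
  have hv1 : v 1 = -1 := by simpa using hv 0
  have main : ∀ k : ℕ, 1 ≤ k → S k = (v k : ℚ_[p]) - (u k : ℚ_[p]) * S 0 := by
    intro k
    induction k using Nat.strong_induction_on with
    | _ k ih =>
      match k with
      | 0 => intro h; omega
      | 1 =>
        intro _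
        rw [hS1, hv1, hu1]
        push_cast
        ring
      | (m + 2) =>
        intro _
        have hkey := key (m + 1)
        rw [if_neg (Nat.succ_ne_zero m)] at hkey
        -- expand the range sum
        have hsplit : ∑ ℓ ∈ Finset.range (m + 3), ((m + 2).choose ℓ : ℚ_[p]) * S ℓ
            = (∑ ℓ ∈ Finset.Icc 1 m, ((m + 2).choose ℓ : ℚ_[p]) * S ℓ) + S 0
              + ((m : ℚ_[p]) + 2) * S (m + 1) + S (m + 2) := by
          rw [show m + 3 = (m + 1) + 1 + 1 from rfl, Finset.sum_range_succ,
            Finset.sum_range_succ, Finset.sum_range_succ']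
          have hIcc : ∑ ℓ ∈ Finset.Icc 1 m, ((m + 2).choose ℓ : ℚ_[p]) * S ℓ
              = ∑ i ∈ Finset.range m, ((m + 2).choose (i + 1) : ℚ_[p]) * S (i + 1) := by
            rw [← Finset.Ico_add_one_right_eq_Icc, Finset.sum_Ico_eq_sum_range]
            simp [add_comm]
          rw [hIcc]
          rw [Nat.choose_succ_self_right, Nat.choose_self, Nat.choose_zero_right]
          push_cast
          ring
        rw [hsplit] at hkey
        have hSm1 : S (m + 1) = (v (m + 1) : ℚ_[p]) - (u (m + 1) : ℚ_[p]) * S 0 :=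
          ih (m + 1) (by omega) (by omega)
        have hsub : ∑ ℓ ∈ Finset.Icc 1 m, ((m + 2).choose ℓ : ℚ_[p]) * S ℓ
            = (∑ ℓ ∈ Finset.Icc 1 m, ((m + 2).choose ℓ : ℚ_[p]) * (v ℓ : ℚ_[p]))
              - (∑ ℓ ∈ Finset.Icc 1 m, ((m + 2).choose ℓ : ℚ_[p]) * (u ℓ : ℚ_[p])) * S 0 := by
          rw [Finset.sum_mul, ← Finset.sum_sub_distrib]
          refine Finset.sum_congr rfl (fun ℓ hℓ => ?_)
          obtain ⟨h1ℓ, hℓm⟩ := Finset.mem_Icc.1 hℓ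
          rw [ih ℓ (by omega) h1ℓ]
          ring
        have hvK : ((v (m + 2) : ℤ) : ℚ_[p]) = -((m : ℚ_[p]) + 1) * (v (m + 1) : ℚ_[p])
            - (∑ ℓ ∈ Finset.Icc 1 m, ((m + 2).choose ℓ : ℚ_[p]) * (v ℓ : ℚ_[p])) := by
          have := hv (m + 1)
          rw [if_neg (Nat.succ_ne_zero m)] at this
          simp only [Nat.add_sub_cancel] at this
          rw [this]
          push_cast
          ring
        have huK : ((u (m + 2) : ℤ) : ℚ_[p]) = -((m : ℚ_[p]) + 1) * (u (m + 1) : ℚ_[p])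
            - (∑ ℓ ∈ Finset.Icc 1 m, ((m + 2).choose ℓ : ℚ_[p]) * (u ℓ : ℚ_[p])) + 1 := by
          have := hu (m + 1) (by omega)
          simp only [Nat.add_sub_cancel] at this
          rw [this]
          push_cast
          ring
        rw [hsub, hSm1] at hkey
        rw [hvK, huK]
        linear_combination -hkey
  -- conclude
  have hfinal := (hS k).add ((hS 0).mul_left (u k : ℚ_[p]))
  have hfun : (fun n : ℕ => (n ! : ℚ_[p]) * (n : ℚ_[p]) ^ k
      + (u k : ℚ_[p]) * ((n ! : ℚ_[p]) * (n : ℚ_[p]) ^ 0))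
      = fun n : ℕ => (n ! : ℚ_[p]) * ((n : ℚ_[p]) ^ k + (u k : ℚ_[p])) := by
    funext n; rw [pow_zero]; ring
  rw [hfun] at hfinal
  rw [main k hk] at hfinal
  have : (v k : ℚ_[p]) - (u k : ℚ_[p]) * S 0 + (u k : ℚ_[p]) * S 0 = (v k : ℚ_[p]) := by ring
  rwa [this] at hfinal
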